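/- arXiv:2310.11751 — 2 statements merged into one kernel-verified Lean document; each statement's English description precedes it below -/
import Mathlib

section
/- Under Equal Allocation, if c > c_H where c_H = (2a−1)V_H/4, then the profile with d_H = d_L = 0 and e_H = e_L = 0 is a Nash equilibrium of the joint contribution-and-effort game, for every incentive volume D > 0. (Theorem 1, high-cost region.) -/
/-! Against a partner who neither contributes nor works, a contribution returns only half of
itself under Equal Allocation, and working raises accuracy from `1/2` to `(2a+1)/4`, which is worth
`(2a-1)V/4 ≤ (2a-1)V_H/4 < c` to either member. -/

noncomputable section

/-- Team solution accuracy as a function of the effort profile `(eH, eL) ∈ {0,1}²`. -/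
def pT (a : ℝ) (eH eL : ℕ) : ℝ :=
  if eH + eL = 0 then 1 / 2 else if eH + eL = 1 then (2 * a + 1) / 4 else a

/-- A member's payoff in the joint contribution-and-effort game under Equal Allocation:
valuation `V`, ability `a`, effort cost `c`, own contribution `dSelf`, the other
member's contribution `dOther`, own effort `eSelf`, the other member's effort `eOther`.
Each member receives half of the incentive pool. -/
def UEA (V a c : ℝ) (dSelf dOther : ℝ) (eSelf eOther : ℕ) : ℝ :=
  V * pT a eSelf eOther + (1 / 2) * (dSelf + dOther) - dSelf - c * eSelf

/-- Nash equilibrium of the joint contribution-and-effort game under Equal Allocation: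
no member can strictly increase her payoff by unilaterally changing her own
contribution-effort pair `(d_m, e_m)` with `d_m ∈ {0, D}` and `e_m ∈ {0, 1}`. -/
def isNEjointEA (a c D VH VL : ℝ) (dH dL : ℝ) (eH eL : ℕ) : Prop :=
  (∀ d' e', (d' = 0 ∨ d' = D) → (e' = 0 ∨ e' = 1) →
    UEA VH a c d' dL e' eL ≤ UEA VH a c dH dL eH eL) ∧
  (∀ d' e', (d' = 0 ∨ d' = D) → (e' = 0 ∨ e' = 1) →
    UEA VL a c d' dH e' eH ≤ UEA VL a c dL dH eL eH)

theorem UEA_eq_sub_half_contrib (V a c d dOther : ℝ) (e eOther : ℕ) :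
    UEA V a c d dOther e eOther = UEA V a c 0 dOther e eOther - d / 2 := by
  simp only [UEA]
  ring

theorem UEA_le_UEA_zero_contrib (V a c : ℝ) {d : ℝ} (hd : 0 ≤ d) (dOther : ℝ) (e eOther : ℕ) :
    UEA V a c d dOther e eOther ≤ UEA V a c 0 dOther e eOther := by
  rw [UEA_eq_sub_half_contrib]
  linarith

theorem UEA_effort_le_shirk_of_cost {V a c : ℝ} (hcost : (2 * a - 1) * V / 4 ≤ c)
    (dOther : ℝ) : UEA V a c 0 dOther 1 0 ≤ UEA V a c 0 dOther 0 0 := by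
  simp only [UEA, pT]
  norm_num
  linarith

theorem shirk_isBestResponse_of_cost {V a c D : ℝ} (hcost : (2 * a - 1) * V / 4 ≤ c)
    (hD : 0 ≤ D) (d' : ℝ) (e' : ℕ) (hd' : d' = 0 ∨ d' = D) (he' : e' = 0 ∨ e' = 1) :
    UEA V a c d' 0 e' 0 ≤ UEA V a c 0 0 0 0 := by
  have hd'_nonneg : 0 ≤ d' := by
    rcases hd' with rfl | rfl
    exacts [le_rfl, hD]
  calc UEA V a c d' 0 e' 0 ≤ UEA V a c 0 0 e' 0 :=
        UEA_le_UEA_zero_contrib V a c hd'_nonneg 0 e' 0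
    _ ≤ UEA V a c 0 0 0 0 := by
        rcases he' with rfl | rfl
        · exact le_rfl
        · exact UEA_effort_le_shirk_of_cost hcost 0

theorem EA_equilibrium_high_cost_general
    (a c D VH VL : ℝ)
    (ha : 1 / 2 < a ∧ a ≤ 1) (hD : 0 < D)
    (hV : VL < VH)
    (hcH : (2 * a - 1) * VH / 4 < c) :
    isNEjointEA a c D VH VL 0 0 0 0 := by
  have hcostH : (2 * a - 1) * VH / 4 ≤ c := hcH.le
  have hcostL : (2 * a - 1) * VL / 4 ≤ c := by
    have : (2 * a - 1) * VL ≤ (2 * a - 1) * VH :=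
      mul_le_mul_of_nonneg_left hV.le (by linarith [ha.1])
    linarith
  exact ⟨shirk_isBestResponse_of_cost hcostH hD.le, shirk_isBestResponse_of_cost hcostL hD.le⟩

/-- Theorem 1, high-cost region: under Equal Allocation, if
`c > c_H = (2a-1)V_H/4`, then `(d_H, d_L) = (0, 0)` together with
`(e_H, e_L) = (0, 0)` is a Nash equilibrium, for every incentive volume `D > 0`. -/
theorem EA_equilibrium_high_cost
    (a c D VH VL : ℝ)
    (ha : 1 / 2 < a ∧ a ≤ 1) (hc : 0 < c) (hD : 0 < D)
    (hVL : 0 < VL) (hV : VL < VH)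
    (hHetero : VH / VL > max ((14 * a - 5) / (6 * a - 1)) ((2 * a + 1) / (3 - 2 * a)))
    (hcH : (2 * a - 1) * VH / 4 < c) :
    isNEjointEA a c D VH VL 0 0 0 0 :=
  EA_equilibrium_high_cost_general a c D VH VL ha hD hV hcH
end
end

section
/- Suppose a ∈ (1/2, 1], V_H > V_L > 0, D > 0, and the effort cost c satisfies c_H < c ≤ c_H + D/2 and D ≤ min{c_L, 2(c_H − c_L)}, where c_L = (2a−1)V_L/4 and c_H = (2a−1)V_H/4. Then under the Shapley Value mechanism: (i) (e_H, e_L) = (1, 0) is a Nash equilibrium of the effort game with pooled incentive P = D; (ii) (e_H, e_L) = (0, 0) is a Nash equilibrium of the effort game with pooled incentive P = 0; and (iii) member L's total payoff at the outcome where only she contributes D and only H exerts effort, namely V_L·(2a+1)/4 − D, is at least her payoff V_L/2 at the outcome with no contributions and no effort. Hence the low-valuation member can profitably fund the pool to induce the high-valuation member's effort. (Counter-intuitive SV equilibrium of Theorem 3.) -/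
/-!
Under the Shapley Value mechanism a lone worker collects the whole pool instead of half of it,
so a unilateral switch of effort changes member `m`'s payoff by `±(c_m + P/2 − c)`.
Hence `(1,0)` is an equilibrium with pool `D` exactly when `c_L + D/2 ≤ c ≤ c_H + D/2`,
and `(0,0)` one without pool exactly when `c_H ≤ c` and `c_L ≤ c`;
the hypotheses place `c` in both ranges, and `D ≤ c_L` makes funding the pool worth its
cost to L.
-/

noncomputable section

/-- Member H's share of the incentive pool under the Shapley Value mechanism
(with the equal-split convention when neither member exerts effort). -/
def pSVH (eH eL : ℕ) : ℝ :=
  if eH = 1 ∧ eL = 0 then 1 else if eH = 0 ∧ eL = 1 then 0 else 1 / 2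

/-- Member L's share of the incentive pool under the Shapley Value mechanism. -/
def pSVL (eH eL : ℕ) : ℝ := 1 - pSVH eH eL

/-- Member H's payoff in the effort game under the Shapley Value mechanism with
pooled incentive `P`. -/
def uSVH (a c P VH : ℝ) (eH eL : ℕ) : ℝ :=
  VH * pT a eH eL + pSVH eH eL * P - c * eH

/-- Member L's payoff in the effort game under the Shapley Value mechanism with
pooled incentive `P`. -/
def uSVL (a c P VL : ℝ) (eH eL : ℕ) : ℝ :=
  VL * pT a eH eL + pSVL eH eL * P - c * eL

/-- Nash equilibrium of the effort game under the Shapley Value mechanism: no member can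
strictly increase her payoff by unilaterally changing her own effort in `{0, 1}`. -/
def isNE_SV (a c P VH VL : ℝ) (eH eL : ℕ) : Prop :=
  (∀ e', e' = 0 ∨ e' = 1 → uSVH a c P VH e' eL ≤ uSVH a c P VH eH eL) ∧
  (∀ e', e' = 0 ∨ e' = 1 → uSVL a c P VL eH e' ≤ uSVL a c P VL eH eL)

/-- The threshold `c_m` of the paper: every unit of effort raises the team accuracy by
`(2a-1)/4`, which member `m` values at `(2a-1)V_m/4`. -/
def costThreshold (a V : ℝ) : ℝ := (2 * a - 1) * V / 4

theorem forall_eq_zero_or_eq_one_imp {p : ℕ → Prop} :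
    (∀ e, e = 0 ∨ e = 1 → p e) ↔ p 0 ∧ p 1 := by
  simp only [or_imp, forall_and, forall_eq]

theorem isNE_SV_one_zero_iff {a c P VH VL : ℝ} :
    isNE_SV a c P VH VL 1 0 ↔
      c ≤ costThreshold a VH + P / 2 ∧ costThreshold a VL + P / 2 ≤ c := by
  simp only [isNE_SV, forall_eq_zero_or_eq_one_imp, uSVH, uSVL, pSVL, pSVH, pT, costThreshold]
  norm_num
  constructor <;> rintro ⟨h₁, h₂⟩ <;> constructor <;> linarith

theorem isNE_SV_zero_zero_iff {a c P VH VL : ℝ} :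
    isNE_SV a c P VH VL 0 0 ↔
      costThreshold a VH + P / 2 ≤ c ∧ costThreshold a VL + P / 2 ≤ c := by
  simp only [isNE_SV, forall_eq_zero_or_eq_one_imp, uSVH, uSVL, pSVL, pSVH, pT, costThreshold]
  norm_num
  constructor <;> rintro ⟨h₁, h₂⟩ <;> constructor <;> linarith

theorem SV_low_valuation_funds_high_valuation_general
    (a c D VH VL : ℝ)
    (hD : 0 < D)
    (hcH : (2 * a - 1) * VH / 4 < c)
    (hcHD : c ≤ (2 * a - 1) * VH / 4 + D / 2)
    (hDle : D ≤ min ((2 * a - 1) * VL / 4) (2 * ((2 * a - 1) * VH / 4 - (2 * a - 1) * VL / 4))) :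
    isNE_SV a c D VH VL 1 0 ∧
    isNE_SV a c 0 VH VL 0 0 ∧
    VL / 2 ≤ VL * (2 * a + 1) / 4 - D := by
  obtain ⟨hDcL, hDgap⟩ := le_min_iff.mp hDle
  rw [isNE_SV_one_zero_iff, isNE_SV_zero_zero_iff]
  unfold costThreshold
  refine ⟨⟨hcHD, ?_⟩, ⟨?_, ?_⟩, ?_⟩ <;> linarith

/-- counter-intuitive SV equilibrium of Theorem 3: if
`c_H < c ≤ c_H + D/2` and `D ≤ min{c_L, 2(c_H − c_L)}`, where `c_L = (2a-1)V_L/4` and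
`c_H = (2a-1)V_H/4`, then under the Shapley Value mechanism (i) `(1,0)` is a Nash
equilibrium of the effort game with pool `P = D`, (ii) `(0,0)` is a Nash equilibrium of
the effort game with pool `P = 0`, and (iii) member L's total payoff when only she
contributes `D` and only H exerts effort, `V_L·(2a+1)/4 − D`, is at least her payoff
`V_L/2` at the no-contribution, no-effort outcome. -/
theorem SV_low_valuation_funds_high_valuation
    (a c D VH VL : ℝ)
    (ha : 1 / 2 < a ∧ a ≤ 1) (hc : 0 < c) (hD : 0 < D)
    (hVL : 0 < VL) (hV : VL < VH)
    (hcH : (2 * a - 1) * VH / 4 < c)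
    (hcHD : c ≤ (2 * a - 1) * VH / 4 + D / 2)
    (hDle : D ≤ min ((2 * a - 1) * VL / 4) (2 * ((2 * a - 1) * VH / 4 - (2 * a - 1) * VL / 4))) :
    isNE_SV a c D VH VL 1 0 ∧
    isNE_SV a c 0 VH VL 0 0 ∧
    VL / 2 ≤ VL * (2 * a + 1) / 4 - D :=
  SV_low_valuation_funds_high_valuation_general a c D VH VL hD hcH hcHD hDle
end
end
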